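/- Let R be a semiring and f : M → N a morphism of R-modules. Then f is an equalizer of some morphism g : N → L and the zero map if and only if f is injective and f(M) is a saturated submodule of N. -/

import Mathlib

universe u

/-- A submodule `N` of a module `M` over a semiring is *saturated* if
`x + y ∈ N` and `y ∈ N` imply `x ∈ N`. -/
def SaturatedSub {R M : Type*} [Semiring R] [AddCommMonoid M] [Module R M]
    (N : Submodule R M) : Prop :=
  ∀ x y : M, x + y ∈ N → y ∈ N → x ∈ N

/-- A bundled module over a semiring `R`. -/
structure BundledMod (R : Type u) [Semiring R] : Type (u + 1) where
  carrier : Type u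
  [addCommMonoid : AddCommMonoid carrier]
  [module : Module R carrier]

attribute [instance] BundledMod.addCommMonoid BundledMod.module

/-!
The kernel of any linear map is saturated, and conversely a saturated submodule `S ≤ N` is the
kernel of the projection to the quotient semimodule `N / S`, built from the congruence
`x + a = y + b` with `a, b ∈ S`. So it suffices to show that `f` is an equalizer of `g` and `0`
exactly when `f` is injective with image `ker g`; testing the universal property on the free
module `R` (whose maps to `N` are points of `N`) gives the forward direction.
-/

open Function LinearMap

section Saturated

variable {R : Type*} [Semiring R] {N L : Type*} [AddCommMonoid N] [Module R N]
  [AddCommMonoid L] [Module R L]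

theorem LinearMap.saturatedSub_ker (g : N →ₗ[R] L) : SaturatedSub (ker g) := by
  intro x y hxy hy
  rw [mem_ker, map_add, mem_ker.1 hy, add_zero] at hxy
  exact hxy

/-- Without subtraction, `x ~ y` is taken to mean `x + a = y + b` for some `a b ∈ S`; the class
of `0` is then the saturation of `S`. -/
def Submodule.saturationCon (S : Submodule R N) : ModuleCon R N where
  r x y := ∃ a ∈ S, ∃ b ∈ S, x + a = y + b
  iseqv := by
    refine ⟨fun x => ⟨0, S.zero_mem, 0, S.zero_mem, rfl⟩, ?_, ?_⟩
    · rintro x y ⟨a, ha, b, hb, h⟩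
      exact ⟨b, hb, a, ha, h.symm⟩
    · rintro x y z ⟨a, ha, b, hb, hxy⟩ ⟨c, hc, d, hd, hyz⟩
      refine ⟨a + c, S.add_mem ha hc, d + b, S.add_mem hd hb, ?_⟩
      rw [← add_assoc, hxy, add_right_comm, hyz, add_right_comm, add_assoc, add_comm b d]
  add' := by
    rintro w x y z ⟨a, ha, b, hb, hwx⟩ ⟨c, hc, d, hd, hyz⟩
    refine ⟨a + c, S.add_mem ha hc, b + d, S.add_mem hb hd, ?_⟩
    rw [add_add_add_comm, hwx, hyz, add_add_add_comm]
  smul r x y := by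
    rintro ⟨a, ha, b, hb, h⟩
    exact ⟨r • a, S.smul_mem r ha, r • b, S.smul_mem r hb, by rw [← smul_add, h, smul_add]⟩

def ModuleCon.mkₗ (c : ModuleCon R N) : N →ₗ[R] c.Quotient where
  __ := c.mk'
  map_smul' _ _ := rfl

theorem Submodule.ker_saturationCon_mkₗ {S : Submodule R N} (hS : SaturatedSub S) :
    ker S.saturationCon.mkₗ = S := by
  ext x
  refine ⟨fun hx => ?_, fun hx => ?_⟩
  · obtain ⟨a, ha, b, hb, hxa⟩ := Quotient.exact hx
    rw [zero_add] at hxa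
    exact hS x a (hxa ▸ hb) ha
  · exact Quotient.sound ⟨0, S.zero_mem, x, hx, by rw [add_zero, zero_add]⟩

end Saturated

section Kernel

universe v

variable {R M N : Type u} [Semiring R] [AddCommMonoid M] [Module R M] [AddCommMonoid N]
  [Module R N] {L : Type v} [AddCommMonoid L] [Module R L]

/-- `f` is an equalizer of `g` and the zero map, tested against modules in the universe of `R`. -/
def LinearMap.IsKernelOf (f : M →ₗ[R] N) (g : N →ₗ[R] L) : Prop :=
  (∀ m, g (f m) = 0) ∧
    ∀ (P : BundledMod R) (h : P.carrier →ₗ[R] N), (∀ p, g (h p) = 0) →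
      ∃! u : P.carrier →ₗ[R] M, f.comp u = h

theorem LinearMap.isKernelOf_iff (f : M →ₗ[R] N) (g : N →ₗ[R] L) :
    f.IsKernelOf g ↔ Injective f ∧ range f = ker g := by
  constructor
  · rintro ⟨hgf, huniv⟩
    have lift (x : N) (hx : g x = 0) : ∃! u : R →ₗ[R] M, f.comp u = toSpanSingleton R N x :=
      huniv ⟨R⟩ _ fun r => by simp [hx]
    refine ⟨fun m₁ m₂ hm => ?_, le_antisymm ?_ fun x hx => ?_⟩
    · have h₁ : f.comp (toSpanSingleton R M m₁) = toSpanSingleton R N (f m₁) := by ext; simp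
      have h₂ : f.comp (toSpanSingleton R M m₂) = toSpanSingleton R N (f m₁) := by ext; simp [hm]
      simpa using LinearMap.congr_fun ((lift _ (hgf m₁)).unique h₁ h₂) 1
    · rintro _ ⟨m, rfl⟩
      exact hgf m
    · obtain ⟨u, hu, -⟩ := lift x hx
      exact ⟨u 1, by simpa using LinearMap.congr_fun hu 1⟩
  · rintro ⟨hf, hfg⟩
    refine ⟨fun m => hfg.le (mem_range_self f m), fun P h hh => ?_⟩
    have hmem (p : P.carrier) : h p ∈ range f := hfg ▸ hh p
    refine ⟨(LinearEquiv.ofInjective f hf).symm.toLinearMap ∘ₗ h.codRestrict _ hmem, ?_,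
      fun u hu => (cancel_left hf).1 ?_⟩
    · ext p; simp
    · ext p; simp [hu]

end Kernel

theorem stmt5 {R : Type u} [Semiring R] {M N : Type u}
    [AddCommMonoid M] [Module R M] [AddCommMonoid N] [Module R N]
    (f : M →ₗ[R] N) :
    (∃ (L : BundledMod R) (g : N →ₗ[R] L.carrier),
        (∀ m : M, g (f m) = 0) ∧
        ∀ (P : BundledMod R) (h : P.carrier →ₗ[R] N),
          (∀ p, g (h p) = 0) → ∃! u : P.carrier →ₗ[R] M, f.comp u = h) ↔
    (Function.Injective f ∧ SaturatedSub (LinearMap.range f)) := by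
  constructor
  · rintro ⟨L, g, hfg⟩
    obtain ⟨hf, hrange⟩ := (isKernelOf_iff f g).1 hfg
    exact ⟨hf, hrange ▸ g.saturatedSub_ker⟩
  · rintro ⟨hf, hsat⟩
    exact ⟨⟨(range f).saturationCon.Quotient⟩, (range f).saturationCon.mkₗ,
      (isKernelOf_iff f _).2 ⟨hf, (Submodule.ker_saturationCon_mkₗ hsat).symm⟩⟩
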